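/- The uniform attachment graphon G(α,β) = 1 − max(α,β) on [0,1]² has spectral decomposition G(α,β) = Σ_{k odd} (4/(k²π²)) · 2 cos(πkα/2) cos(πkβ/2); that is, for each odd positive integer k, f_k(x) = √2 cos(πkx/2) is an eigenfunction of the associated integral operator with eigenvalue 4/(k²π²), and these exhaust the nonzero spectrum. -/

import Mathlib

open MeasureTheory Real intervalIntegral

/-- The uniform attachment graphon `1 − max(α,β)`. -/
noncomputable def Gua (α β : ℝ) : ℝ := 1 - max α β

/-- `f_k(x) = √2 cos(πkx/2)`. -/
noncomputable def fua (k : ℕ) : ℝ → ℝ := fun x => Real.sqrt 2 * Real.cos (π * k * x / 2)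

/-!
Removing the even-index terms from the Bernoulli Fourier series
`∑ cos (2πnx) / n² = π² (x² - x + 1/6)` leaves `∑_{n odd} cos (πnu/2) / n² = π² (1 - u) / 8`
on `[0, 2]`. Since `1 - max α β = (1 - |α - β|) / 2 + (1 - (α + β)) / 2` and
`2 cos a cos b = cos (a - b) + cos (a + b)`, this gives the absolutely convergent expansion
`G α β = ∑_{k odd} λ_k f_k α f_k β` with `λ_k = 4 / (k²π²)`. Integrating it term by term against `f`
(dominated by `∑ 8 |f| / (k²π²)`) gives `Gf = ∑ λ_k ⟨f, f_k⟩ f_k`, and orthonormality of the `f_k`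
yields both the eigen-equations and that `G` annihilates their orthogonal complement.
-/

lemma bernoulli_two_eval (x : ℝ) :
    ((Polynomial.bernoulli 2).map (algebraMap ℚ ℝ)).eval x = x ^ 2 - x + 1 / 6 := by
  simp [Polynomial.bernoulli, Finset.sum_range_succ, Polynomial.eval_monomial]
  ring

lemma hasSum_cos_div_sq {x : ℝ} (hx : x ∈ Set.Icc (0 : ℝ) 1) :
    HasSum (fun n : ℕ => cos (2 * π * n * x) / n ^ 2) (π ^ 2 * (x ^ 2 - x + 1 / 6)) := by
  have h := hasSum_one_div_nat_pow_mul_cos one_ne_zero hx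
  simp only [Nat.mul_one, bernoulli_two_eval] at h
  convert h using 1
  · ext n; ring
  · rw [Nat.factorial_two]; push_cast; ring

lemma hasSum_odd_cos_div_sq {u : ℝ} (hu : u ∈ Set.Icc (0 : ℝ) 2) :
    HasSum (fun n : ℕ => if Odd n then cos (π * n * u / 2) / n ^ 2 else 0)
      (π ^ 2 / 8 * (1 - u)) := by
  obtain ⟨hu0, hu2⟩ := hu
  have hall : HasSum (fun n : ℕ => cos (π * n * u / 2) / n ^ 2)
      (π ^ 2 * ((u / 4) ^ 2 - u / 4 + 1 / 6)) :=
    (hasSum_cos_div_sq ⟨by linarith, by linarith⟩).congr_fun fun n => by ring_nf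
  have heven : HasSum (fun n : ℕ => if Even n then cos (π * n * u / 2) / n ^ 2 else 0)
      (π ^ 2 * ((u / 2) ^ 2 - u / 2 + 1 / 6) / 4) := by
    rw [← (mul_right_injective₀ two_ne_zero).hasSum_iff]
    · refine ((hasSum_cos_div_sq ⟨by linarith, by linarith⟩).div_const 4).congr_fun fun m => ?_
      simp only [Function.comp_apply, even_two_mul, if_true]
      push_cast
      ring_nf
    · rintro n hn
      rw [if_neg]
      rintro ⟨m, rfl⟩
      exact hn ⟨m, two_mul m⟩
  have hsplit : ∀ n : ℕ, (if Odd n then cos (π * n * u / 2) / n ^ 2 else 0) =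
      cos (π * n * u / 2) / n ^ 2 - if Even n then cos (π * n * u / 2) / n ^ 2 else 0 := by
    intro n
    rcases Nat.even_or_odd n with h | h
    · simp [h, Nat.not_odd_iff_even.mpr h]
    · simp [h, Nat.not_even_iff_odd.mpr h]
  have hvalue : π ^ 2 * ((u / 4) ^ 2 - u / 4 + 1 / 6) - π ^ 2 * ((u / 2) ^ 2 - u / 2 + 1 / 6) / 4 =
      π ^ 2 / 8 * (1 - u) := by ring
  exact hvalue ▸ (hall.sub heven).congr_fun hsplit

lemma fua_mul_fua (k l : ℕ) (x y : ℝ) :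
    fua k x * fua l y = 2 * cos (π * k * x / 2) * cos (π * l * y / 2) := by
  simp only [fua]
  linear_combination cos (π * k * x / 2) * cos (π * l * y / 2) * sq_sqrt zero_le_two

lemma one_sub_max_eq (α β : ℝ) : 1 - max α β = (1 - |α - β|) / 2 + (1 - (α + β)) / 2 := by
  linarith [max_sub_min_eq_abs' α β, min_add_max α β]

lemma hasSum_Gua {α β : ℝ} (hα : α ∈ Set.Icc (0 : ℝ) 1) (hβ : β ∈ Set.Icc (0 : ℝ) 1) :
    HasSum (fun k : ℕ => if Odd k then 4 / (k ^ 2 * π ^ 2) * fua k α * fua k β else 0)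
      (Gua α β) := by
  obtain ⟨hα0, hα1⟩ := hα
  obtain ⟨hβ0, hβ1⟩ := hβ
  have hdiff := (hasSum_odd_cos_div_sq (u := |α - β|)
    ⟨abs_nonneg _, (abs_sub_le_iff.mpr ⟨by linarith, by linarith⟩)⟩).mul_left (4 / π ^ 2)
  have hsum := (hasSum_odd_cos_div_sq (u := α + β) ⟨by linarith, by linarith⟩).mul_left (4 / π ^ 2)
  have hvalue : 4 / π ^ 2 * (π ^ 2 / 8 * (1 - |α - β|)) + 4 / π ^ 2 * (π ^ 2 / 8 * (1 - (α + β)))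
      = Gua α β := by
    rw [Gua, one_sub_max_eq]
    field_simp
    ring
  refine hvalue ▸ (hdiff.add hsum).congr_fun fun k => ?_
  by_cases hk : Odd k
  · have hcos : cos (π * k * |α - β| / 2) = cos (π * k * α / 2 - π * k * β / 2) := by
      rcases abs_choice (α - β) with h | h <;> rw [h]
      · ring_nf
      · rw [← cos_neg]; ring_nf
    have hcos' : cos (π * k * (α + β) / 2) = cos (π * k * α / 2 + π * k * β / 2) := by ring_nf
    simp only [hk, if_true]
    rw [mul_assoc, fua_mul_fua, two_mul_cos_mul_cos, hcos, hcos']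
    ring
  · simp [hk]

lemma integral_cos_int_mul_pi (m : ℤ) :
    ∫ x in (0 : ℝ)..1, cos (m * π * x) = if m = 0 then 1 else 0 := by
  split_ifs with hm
  · simp [hm]
  · have hc : (m * π : ℝ) ≠ 0 := mul_ne_zero (Int.cast_ne_zero.mpr hm) pi_ne_zero
    simp [integral_comp_mul_left cos hc, sin_int_mul_pi]

lemma integral_fua_mul_fua {k l : ℕ} (hk : Odd k) (hl : Odd l) :
    ∫ x in (0 : ℝ)..1, fua k x * fua l x = if k = l then 1 else 0 := by
  obtain ⟨a, rfl⟩ := hk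
  obtain ⟨b, rfl⟩ := hl
  have hprod : ∀ x, fua (2 * a + 1) x * fua (2 * b + 1) x =
      cos (((a - b : ℤ) : ℝ) * π * x) + cos (((a + b + 1 : ℤ) : ℝ) * π * x) := by
    intro x
    rw [fua_mul_fua, two_mul_cos_mul_cos]
    push_cast
    ring_nf
  simp_rw [hprod]
  rw [intervalIntegral.integral_add ((by fun_prop : Continuous _).intervalIntegrable _ _)
    ((by fun_prop : Continuous _).intervalIntegrable _ _), integral_cos_int_mul_pi,
    integral_cos_int_mul_pi]
  split_ifs <;> norm_num <;> omega

lemma continuous_fua (k : ℕ) : Continuous (fua k) := by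
  unfold fua; fun_prop

lemma abs_fua_mul_fua_le (k l : ℕ) (x y : ℝ) : |fua k x * fua l y| ≤ 2 := by
  rw [fua_mul_fua, abs_mul, abs_mul, abs_two]
  nlinarith [abs_cos_le_one (π * k * x / 2), abs_cos_le_one (π * l * y / 2),
    abs_nonneg (cos (π * k * x / 2)), abs_nonneg (cos (π * l * y / 2))]

lemma hasSum_integral_Gua_mul {α : ℝ} (hα : α ∈ Set.Icc (0 : ℝ) 1) {f : ℝ → ℝ}
    (hf : IntervalIntegrable f volume 0 1) :
    HasSum (fun k : ℕ => (if Odd k then 4 / (k ^ 2 * π ^ 2) * fua k α else 0) *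
      ∫ β in (0 : ℝ)..1, f β * fua k β) (∫ β in (0 : ℝ)..1, Gua α β * f β) := by
  simp_rw [← intervalIntegral.integral_const_mul]
  refine hasSum_integral_of_dominated_convergence (fun k β => 8 / (k ^ 2 * π ^ 2) * ‖f β‖)
    (fun k => ?_) (fun k => ?_) ?_ ?_ ?_
  · exact ((hf.mul_continuousOn (continuous_fua k).continuousOn).const_mul _)
      |>.aestronglyMeasurable_restrict_uIoc
  · refine ae_of_all _ fun β _ => ?_
    by_cases hk : Odd k
    · simp only [hk, if_true, norm_mul, Real.norm_eq_abs,
        abs_of_nonneg (by positivity : (0 : ℝ) ≤ 4 / (k ^ 2 * π ^ 2))]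
      calc 4 / (k ^ 2 * π ^ 2) * |fua k α| * (|f β| * |fua k β|)
          = 4 / (k ^ 2 * π ^ 2) * |fua k α * fua k β| * |f β| := by rw [abs_mul]; ring
        _ ≤ 4 / (k ^ 2 * π ^ 2) * 2 * |f β| := by gcongr; exact abs_fua_mul_fua_le k k α β
        _ = 8 / (k ^ 2 * π ^ 2) * |f β| := by ring
    · simp only [hk, if_false, zero_mul, norm_zero]
      positivity
  · refine ae_of_all _ fun β _ => Summable.mul_right _ ?_
    exact ((summable_one_div_nat_pow.mpr one_lt_two).mul_left (8 / π ^ 2)).congr fun k => by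
      field_simp
  · simp_rw [tsum_mul_right]
    exact hf.norm.const_mul _
  · refine ae_of_all _ fun β hβ => ?_
    rw [Set.uIoc_of_le zero_le_one] at hβ
    refine ((hasSum_Gua hα (Set.Ioc_subset_Icc_self hβ)).mul_right (f β)).congr_fun fun k => ?_
    by_cases hk : Odd k
    · simp only [hk, if_true]; ring
    · simp [hk]

/-- Spectral decomposition of the uniform attachment graphon: for each odd `k`,
`√2 cos(πkx/2)` is an eigenfunction with eigenvalue `4/(k²π²)`, these are
orthonormal in `L²[0,1]`, the kernel equals the corresponding series, and any
`f` orthogonal to all of them is annihilated by the integral operator (so they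
exhaust the nonzero spectrum). -/
theorem stmt_13 :
    (∀ k : ℕ, Odd k → ∀ α ∈ Set.Icc (0:ℝ) 1,
      (∫ β in (0:ℝ)..1, Gua α β * fua k β) = (4 / ((k:ℝ)^2 * π^2)) * fua k α) ∧
    (∀ k l : ℕ, Odd k → Odd l →
      (∫ x in (0:ℝ)..1, fua k x * fua l x) = if k = l then 1 else 0) ∧
    (∀ α ∈ Set.Icc (0:ℝ) 1, ∀ β ∈ Set.Icc (0:ℝ) 1,
      Gua α β = ∑' k : ℕ, if Odd k then
        (4 / ((k:ℝ)^2 * π^2)) * 2 * Real.cos (π * k * α / 2) * Real.cos (π * k * β / 2)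
      else 0) ∧
    (∀ f : ℝ → ℝ, IntervalIntegrable f volume 0 1 →
      (∀ k : ℕ, Odd k → (∫ x in (0:ℝ)..1, f x * fua k x) = 0) →
      ∀ α ∈ Set.Icc (0:ℝ) 1, (∫ β in (0:ℝ)..1, Gua α β * f β) = 0) := by
  refine ⟨fun k hk α hα => ?_, fun k l hk hl => integral_fua_mul_fua hk hl,
    fun α hα β hβ => ?_, fun f hf horth α hα => ?_⟩
  · refine (hasSum_integral_Gua_mul hα ((continuous_fua k).intervalIntegrable 0 1)).unique
      ((hasSum_ite_eq k _).congr_fun fun l => ?_)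
    rcases eq_or_ne l k with rfl | hne
    · simp [hk, integral_fua_mul_fua hk hk]
    · by_cases hl : Odd l
      · rw [integral_fua_mul_fua hk hl, if_neg hne.symm, mul_zero, if_neg hne]
      · simp [hl, hne]
  · rw [← (hasSum_Gua hα hβ).tsum_eq]
    refine tsum_congr fun k => ?_
    split_ifs
    · rw [mul_assoc, fua_mul_fua]; ring
    · rfl
  · refine (hasSum_integral_Gua_mul hα hf).unique (hasSum_zero.congr_fun fun k => ?_)
    by_cases hk : Odd k
    · rw [horth k hk, mul_zero]
    · simp [hk]
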